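/- arXiv:2404.15986 — 2 statements merged into one kernel-verified Lean document; each statement's English description precedes it below -/
import Mathlib

section
/- For any fitness graph 𝒢=(G,(m,r)) and any two seed sets S ⊆ S' ⊆ V, the fixation probabilities satisfy fp_𝒢(S) ≤ fp_𝒢(S'). -/
open Finset
open scoped Classical

/-- A fitness graph: a finite strongly connected weighted directed graph together with
mutant and resident fitness functions. `w u v > 0` encodes that `(u,v)` is an edge
of non-zero weight; `w u ·` is a probability distribution. -/
structure FitnessGraph (V : Type) [Fintype V] [DecidableEq V] where
  w : V → V → ℝ
  m : V → ℝ
  r : V → ℝ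
  w_nonneg : ∀ u v, 0 ≤ w u v
  w_rowsum : ∀ u, ∑ v, w u v = 1
  strongly_connected : ∀ u v : V, Relation.ReflTransGen (fun a b => 0 < w a b) u v
  m_pos : ∀ u, 0 < m u
  r_pos : ∀ u, 0 < r u

variable {V : Type} [Fintype V] [DecidableEq V]

/-- A fitness graph is mutant-biased if `m(u) ≥ r(u)` for every node `u`. -/
def FitnessGraph.MutantBiased (G : FitnessGraph V) : Prop :=
  ∀ u, G.r u ≤ G.m u

/-- The (out-)degree of a node: the number of neighbors along edges of non-zero weight. -/
noncomputable def FitnessGraph.deg (G : FitnessGraph V) (u : V) : ℕ :=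
  (Finset.univ.filter fun v => 0 < G.w u v).card

/-- A fitness graph is undirected if its edge relation is symmetric and the weights
are uniform: `w(u,v) = 1/d(u)` for every edge `(u,v)`. -/
def FitnessGraph.Undirected (G : FitnessGraph V) : Prop :=
  (∀ u v, 0 < G.w u v → 0 < G.w v u) ∧
  ∀ u v, 0 < G.w u v → G.w u v = 1 / (G.deg u : ℝ)

/-- The fitness of node `u` in configuration `X`: `m(u)` if `u` is a mutant, `r(u)` otherwise. -/
def FitnessGraph.fit (G : FitnessGraph V) (X : Finset V) (u : V) : ℝ :=
  if u ∈ X then G.m u else G.r u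

/-- Total population fitness in configuration `X`. -/
def FitnessGraph.totalFit (G : FitnessGraph V) (X : Finset V) : ℝ :=
  ∑ u, G.fit X u

/-- The configuration resulting from `X` when `u` reproduces and replaces `v`. -/
def moranNext (X : Finset V) (u v : V) : Finset V :=
  if u ∈ X then insert v X else X.erase v

/-- One-step transition probability of the Heterogeneous Moran process. -/
noncomputable def FitnessGraph.step (G : FitnessGraph V) (X Y : Finset V) : ℝ :=
  ∑ u, ∑ v, (G.fit X u / G.totalFit X) * G.w u v * (if moranNext X u v = Y then 1 else 0)

/-- `t`-step transition probability of the Heterogeneous Moran process. -/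
noncomputable def FitnessGraph.stepN (G : FitnessGraph V) : ℕ → Finset V → Finset V → ℝ
  | 0, X, Y => if X = Y then 1 else 0
  | t + 1, X, Y => ∑ Z, FitnessGraph.stepN G t X Z * G.step Z Y

/-- Fixation probability: the probability that, started from seed set `S`, the process
eventually reaches the all-mutant configuration `V`; since `V` is absorbing this equals
`⨆ t, P(X_t = V)`. -/
noncomputable def FitnessGraph.fp (G : FitnessGraph V) (S : Finset V) : ℝ :=
  ⨆ t : ℕ, G.stepN t S Finset.univ

/-!
The one-step operator of the Moran chain need not preserve monotone functions of the
configuration, because the total fitness, which sets the speed of the chain, depends on the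
configuration. Uniformizing repairs this: let every configuration `X` fire at the common rate
`maxFit` and stay put with probability `1 - totalFit X / maxFit`. Comparing the contributions
of each reproducing node `u` and replaced node `v` shows that one step of this lazy chain maps
monotone functions to monotone functions, so its `t`-step probabilities of being at `V`, and
hence their increasing limits, are monotone in the seed. The absorption probability of a
stochastic matrix at an absorbing state is its least nonnegative harmonic function that is at
least `1` there, and the two chains have the same harmonic functions, so their absorption
probabilities coincide.
-/

namespace Matrix

variable {α : Type*} [Fintype α] {K : Matrix α α ℝ}

lemma mulVec_mono_of_nonneg (hK : ∀ i j, 0 ≤ K i j) {g h : α → ℝ} (hgh : g ≤ h) :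
    K *ᵥ g ≤ K *ᵥ h := fun x =>
  Finset.sum_le_sum fun y _ => mul_le_mul_of_nonneg_left (hgh y) (hK x y)

variable [DecidableEq α] {a : α}

noncomputable def absorptionProb (K : Matrix α α ℝ) (a : α) (x : α) : ℝ :=
  ⨆ t : ℕ, (K ^ t) x a

lemma pow_succ_apply_eq_mulVec (K : Matrix α α ℝ) (t : ℕ) (a : α) :
    (fun x => (K ^ (t + 1)) x a) = K *ᵥ fun x => (K ^ t) x a := by
  funext x
  rw [pow_succ', mul_apply]
  rfl

lemma bddAbove_range_pow_apply (hK : K ∈ rowStochastic ℝ α) (x a : α) :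
    BddAbove (Set.range fun t => (K ^ t) x a) :=
  ⟨1, by rintro _ ⟨t, rfl⟩; exact le_one_of_mem_rowStochastic (pow_mem hK t)⟩

lemma le_absorptionProb (hK : K ∈ rowStochastic ℝ α) (t : ℕ) (x : α) :
    (K ^ t) x a ≤ absorptionProb K a x :=
  le_ciSup (bddAbove_range_pow_apply hK x a) t

lemma absorptionProb_nonneg (hK : K ∈ rowStochastic ℝ α) : 0 ≤ absorptionProb K a := fun x =>
  (nonneg_of_mem_rowStochastic (pow_mem hK 0)).trans (le_absorptionProb hK 0 x)

lemma one_le_absorptionProb_self (hK : K ∈ rowStochastic ℝ α) : 1 ≤ absorptionProb K a a := by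
  simpa using le_absorptionProb (a := a) hK 0 a

lemma monotone_pow_apply_of_absorbing (hK : K ∈ rowStochastic ℝ α) (ha : K a a = 1) (x : α) :
    Monotone fun t => (K ^ t) x a :=
  monotone_nat_of_le_succ fun t =>
    calc (K ^ t) x a = (K ^ t) x a * K a a := by rw [ha, mul_one]
      _ ≤ ∑ z, (K ^ t) x z * K z a :=
        Finset.single_le_sum (f := fun z => (K ^ t) x z * K z a)
          (fun z _ => mul_nonneg (nonneg_of_mem_rowStochastic (pow_mem hK t))
            (nonneg_of_mem_rowStochastic hK)) (Finset.mem_univ a)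
      _ = (K ^ (t + 1)) x a := by rw [pow_succ, mul_apply]

open Filter Topology in
/-- `absorptionProb K a` is `K`-harmonic: the column `t ↦ (K ^ t) · a` increases to it and
`K *ᵥ` maps column `t` to column `t + 1`. -/
lemma mulVec_absorptionProb (hK : K ∈ rowStochastic ℝ α) (ha : K a a = 1) :
    K *ᵥ absorptionProb K a = absorptionProb K a := by
  have hcol : Tendsto (fun t x => (K ^ t) x a) atTop (𝓝 (absorptionProb K a)) :=
    tendsto_pi_nhds.2 fun x =>
      tendsto_atTop_ciSup (monotone_pow_apply_of_absorbing hK ha x)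
        (bddAbove_range_pow_apply hK x a)
  have hnext : Tendsto (fun t x => (K ^ (t + 1)) x a) atTop (𝓝 (K *ᵥ absorptionProb K a)) := by
    rw [show (fun t x => (K ^ (t + 1)) x a) = fun t => K *ᵥ fun x => (K ^ t) x a from
      funext fun t => pow_succ_apply_eq_mulVec K t a]
    exact ((continuous_const.matrix_mulVec continuous_id).tendsto _).comp hcol
  exact tendsto_nhds_unique hnext (hcol.comp (tendsto_add_atTop_nat 1))

lemma absorptionProb_le_of_mulVec_eq (hK : ∀ i j, 0 ≤ K i j) {h : α → ℝ} (h0 : 0 ≤ h)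
    (h1 : 1 ≤ h a) (hh : K *ᵥ h = h) : absorptionProb K a ≤ h := by
  have hpow : ∀ t, (fun x => (K ^ t) x a) ≤ h := by
    intro t
    induction t with
    | zero =>
      intro x
      by_cases hx : x = a
      · subst hx; simpa using h1
      · simpa [one_apply, hx] using h0 x
    | succ t ih =>
      rw [pow_succ_apply_eq_mulVec, ← hh]
      exact mulVec_mono_of_nonneg hK ih
  exact fun x => ciSup_le fun t => hpow t x

lemma absorptionProb_eq_of_mulVec_eq_self_iff {L : Matrix α α ℝ} (hK : K ∈ rowStochastic ℝ α)
    (hL : L ∈ rowStochastic ℝ α) (hKa : K a a = 1) (hLa : L a a = 1)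
    (hKL : ∀ h, K *ᵥ h = h ↔ L *ᵥ h = h) : absorptionProb K a = absorptionProb L a :=
  le_antisymm
    (absorptionProb_le_of_mulVec_eq (fun _ _ => nonneg_of_mem_rowStochastic hK)
      (absorptionProb_nonneg hL) (one_le_absorptionProb_self hL)
      ((hKL _).2 (mulVec_absorptionProb hL hLa)))
    (absorptionProb_le_of_mulVec_eq (fun _ _ => nonneg_of_mem_rowStochastic hL)
      (absorptionProb_nonneg hK) (one_le_absorptionProb_self hK)
      ((hKL _).1 (mulVec_absorptionProb hK hKa)))

lemma monotone_pow_apply [PartialOrder α] (hK : ∀ g : α → ℝ, Monotone g → Monotone (K *ᵥ g))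
    (ha : IsMax a) (t : ℕ) : Monotone fun x => (K ^ t) x a := by
  induction t with
  | zero =>
    intro x y hxy
    by_cases hx : x = a
    · subst hx; simp [ha.eq_of_le hxy]
    · simp only [pow_zero, one_apply, if_neg hx]
      split <;> norm_num
  | succ t ih =>
    rw [pow_succ_apply_eq_mulVec]
    exact hK _ ih

lemma monotone_absorptionProb [PartialOrder α] (hK : K ∈ rowStochastic ℝ α)
    (hmono : ∀ g : α → ℝ, Monotone g → Monotone (K *ᵥ g)) (ha : IsMax a) :
    Monotone (absorptionProb K a) := fun _ y hxy =>
  ciSup_le fun t => (monotone_pow_apply hmono ha t hxy).trans (le_absorptionProb hK t y)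

def lazy (K : Matrix α α ℝ) (d : α → ℝ) : Matrix α α ℝ :=
  diagonal d * K + diagonal (1 - d)

lemma lazy_mulVec (K : Matrix α α ℝ) (d g : α → ℝ) :
    K.lazy d *ᵥ g = d * (K *ᵥ g) + (1 - d) * g := by
  funext x
  simp [lazy, add_mulVec, ← mulVec_mulVec, mulVec_diagonal]

lemma lazy_mem_rowStochastic (hK : K ∈ rowStochastic ℝ α) {d : α → ℝ} (hd0 : 0 ≤ d)
    (hd1 : d ≤ 1) : K.lazy d ∈ rowStochastic ℝ α := by
  refine ⟨fun i j => ?_, ?_⟩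
  · simp only [lazy, add_apply, diagonal_mul, diagonal_apply]
    refine add_nonneg (mul_nonneg (hd0 i) (nonneg_of_mem_rowStochastic hK)) ?_
    split
    · exact sub_nonneg.2 (hd1 i)
    · exact le_rfl
  · rw [lazy_mulVec, one_vecMul_of_mem_rowStochastic hK]
    ring

lemma lazy_apply_self (d : α → ℝ) (ha : K a a = 1) : K.lazy d a a = 1 := by
  simp [lazy, diagonal_mul, ha]

lemma lazy_mulVec_eq_self_iff {d : α → ℝ} (hd : ∀ x, d x ≠ 0) (h : α → ℝ) :
    K.lazy d *ᵥ h = h ↔ K *ᵥ h = h := by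
  rw [lazy_mulVec]
  constructor
  · intro hh
    funext x
    have := congrFun hh x
    simp only [Pi.add_apply, Pi.mul_apply, Pi.sub_apply, Pi.one_apply] at this
    have : d x * ((K *ᵥ h) x - h x) = 0 := by linear_combination this
    linarith [(mul_eq_zero.1 this).resolve_left (hd x)]
  · intro hh
    rw [hh]
    ring

lemma absorptionProb_lazy (hK : K ∈ rowStochastic ℝ α) (ha : K a a = 1) {d : α → ℝ}
    (hd0 : ∀ x, 0 < d x) (hd1 : d ≤ 1) : absorptionProb (K.lazy d) a = absorptionProb K a :=
  absorptionProb_eq_of_mulVec_eq_self_iff (lazy_mem_rowStochastic hK (fun x => (hd0 x).le) hd1)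
    hK (lazy_apply_self d ha) ha fun h => lazy_mulVec_eq_self_iff (fun x => (hd0 x).ne') h

end Matrix

namespace FitnessGraph

open Matrix

variable (G : FitnessGraph V)

noncomputable def stepMatrix : Matrix (Finset V) (Finset V) ℝ :=
  Matrix.of G.step

lemma stepN_eq_stepMatrix_pow (t : ℕ) (X Y : Finset V) :
    G.stepN t X Y = (G.stepMatrix ^ t) X Y := by
  induction t generalizing Y with
  | zero => simp [stepN, one_apply]
  | succ t ih => simp only [stepN, ih, pow_succ, mul_apply, stepMatrix, of_apply]

lemma fp_eq_absorptionProb (S : Finset V) :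
    G.fp S = absorptionProb G.stepMatrix Finset.univ S := by
  simp only [fp, absorptionProb, stepN_eq_stepMatrix_pow]

lemma fit_pos (X : Finset V) (u : V) : 0 < G.fit X u := by
  unfold fit
  split
  · exact G.m_pos u
  · exact G.r_pos u

lemma totalFit_pos [Nonempty V] (X : Finset V) : 0 < G.totalFit X :=
  Finset.sum_pos (fun u _ => G.fit_pos X u) Finset.univ_nonempty

lemma sum_fit_div_totalFit [Nonempty V] (X : Finset V) : ∑ u, G.fit X u / G.totalFit X = 1 := by
  rw [← Finset.sum_div]
  exact div_self (G.totalFit_pos X).ne'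

lemma stepMatrix_mulVec_apply (g : Finset V → ℝ) (X : Finset V) :
    (G.stepMatrix *ᵥ g) X
      = ∑ u, ∑ v, G.fit X u / G.totalFit X * G.w u v * g (moranNext X u v) := by
  simp only [stepMatrix, mulVec, dotProduct, of_apply, step, Finset.sum_mul]
  rw [Finset.sum_comm]
  refine Finset.sum_congr rfl fun u _ => ?_
  rw [Finset.sum_comm]
  simp [mul_ite, ite_mul]

lemma stepMatrix_mem_rowStochastic [Nonempty V] :
    G.stepMatrix ∈ rowStochastic ℝ (Finset V) := by
  refine mem_rowStochastic_iff_sum.2 ⟨fun X Y => ?_, fun X => ?_⟩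
  · refine Finset.sum_nonneg fun u _ => Finset.sum_nonneg fun v _ => ?_
    have := (G.fit_pos X u).le
    have := (G.totalFit_pos X).le
    have := G.w_nonneg u v
    split <;> positivity
  · have h := G.stepMatrix_mulVec_apply 1 X
    simpa [mulVec, dotProduct, ← Finset.mul_sum, G.w_rowsum, G.sum_fit_div_totalFit] using h

lemma stepMatrix_univ_univ [Nonempty V] : G.stepMatrix Finset.univ Finset.univ = 1 := by
  have h := G.stepMatrix_mulVec_apply (fun Y => if Y = Finset.univ then 1 else 0) Finset.univ
  simpa [mulVec, dotProduct, moranNext, ← Finset.mul_sum, G.w_rowsum, G.sum_fit_div_totalFit]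
    using h

noncomputable def maxFit : ℝ :=
  ∑ u, max (G.m u) (G.r u)

lemma totalFit_le_maxFit (X : Finset V) : G.totalFit X ≤ G.maxFit :=
  Finset.sum_le_sum fun u _ => by unfold fit; split <;> simp

lemma maxFit_pos [Nonempty V] : 0 < G.maxFit :=
  (G.totalFit_pos ∅).trans_le (G.totalFit_le_maxFit ∅)

lemma totalFit_div_maxFit_pos [Nonempty V] (X : Finset V) : 0 < G.totalFit X / G.maxFit :=
  div_pos (G.totalFit_pos X) G.maxFit_pos

lemma totalFit_div_maxFit_le_one [Nonempty V] (X : Finset V) : G.totalFit X / G.maxFit ≤ 1 :=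
  div_le_one_of_le₀ (G.totalFit_le_maxFit X) G.maxFit_pos.le

noncomputable def lazyStep : Matrix (Finset V) (Finset V) ℝ :=
  G.stepMatrix.lazy fun X => G.totalFit X / G.maxFit

lemma lazyStep_mem_rowStochastic [Nonempty V] : G.lazyStep ∈ rowStochastic ℝ (Finset V) :=
  lazy_mem_rowStochastic G.stepMatrix_mem_rowStochastic
    (fun X => (G.totalFit_div_maxFit_pos X).le) G.totalFit_div_maxFit_le_one

lemma absorptionProb_lazyStep [Nonempty V] :
    absorptionProb G.lazyStep Finset.univ = absorptionProb G.stepMatrix Finset.univ :=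
  absorptionProb_lazy G.stepMatrix_mem_rowStochastic G.stepMatrix_univ_univ
    G.totalFit_div_maxFit_pos G.totalFit_div_maxFit_le_one

lemma lazyStep_mulVec_apply [Nonempty V] (g : Finset V → ℝ) (X : Finset V) :
    (G.lazyStep *ᵥ g) X = (∑ u, ∑ v, G.w u v *
      (G.fit X u * g (moranNext X u v) + (max (G.m u) (G.r u) - G.fit X u) * g X)) / G.maxFit := by
  have hF := (G.totalFit_pos X).ne'
  have hC := G.maxFit_pos.ne'
  have hsplit : ∑ u, ∑ v, G.w u v *
      (G.fit X u * g (moranNext X u v) + (max (G.m u) (G.r u) - G.fit X u) * g X)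
      = ∑ u, ∑ v, G.fit X u * G.w u v * g (moranNext X u v)
        + (G.maxFit - G.totalFit X) * g X := by
    simp only [mul_add, Finset.sum_add_distrib, ← Finset.sum_mul, G.w_rowsum, one_mul,
      maxFit, totalFit, Finset.sum_sub_distrib]
    congr 1
    exact Finset.sum_congr rfl fun u _ => Finset.sum_congr rfl fun v _ => by ring
  simp only [lazyStep, lazy_mulVec, Pi.add_apply, Pi.mul_apply, Pi.sub_apply, Pi.one_apply,
    stepMatrix_mulVec_apply, div_mul_eq_mul_div, ← Finset.sum_div, hsplit]
  field_simp

lemma monotone_fit_mul_moranNext {g : Finset V → ℝ} (hg : Monotone g) (u v : V) :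
    Monotone fun X => G.fit X u * g (moranNext X u v) + (max (G.m u) (G.r u) - G.fit X u) * g X := by
  intro X X' hXX'
  have hm : 0 ≤ max (G.m u) (G.r u) - G.m u := sub_nonneg.2 (le_max_left _ _)
  have hr : 0 ≤ max (G.m u) (G.r u) - G.r u := sub_nonneg.2 (le_max_right _ _)
  simp only [fit, moranNext]
  by_cases hu : u ∈ X
  · simp only [if_pos hu, if_pos (hXX' hu)]
    exact add_le_add (mul_le_mul_of_nonneg_left (hg (insert_subset_insert v hXX')) (G.m_pos u).le)
      (mul_le_mul_of_nonneg_left (hg hXX') hm)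
  by_cases hu' : u ∈ X'
  · simp only [if_neg hu, if_pos hu']
    calc G.r u * g (X.erase v) + (max (G.m u) (G.r u) - G.r u) * g X
        ≤ G.r u * g X + (max (G.m u) (G.r u) - G.r u) * g X :=
          add_le_add_left (mul_le_mul_of_nonneg_left (hg (erase_subset v X)) (G.r_pos u).le) _
      _ = G.m u * g X + (max (G.m u) (G.r u) - G.m u) * g X := by ring
      _ ≤ G.m u * g (insert v X') + (max (G.m u) (G.r u) - G.m u) * g X' :=
          add_le_add
            (mul_le_mul_of_nonneg_left (hg (hXX'.trans (subset_insert v X'))) (G.m_pos u).le)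
            (mul_le_mul_of_nonneg_left (hg hXX') hm)
  · simp only [if_neg hu, if_neg hu']
    exact add_le_add (mul_le_mul_of_nonneg_left (hg (erase_subset_erase v hXX')) (G.r_pos u).le)
      (mul_le_mul_of_nonneg_left (hg hXX') hr)

lemma monotone_lazyStep_mulVec [Nonempty V] {g : Finset V → ℝ} (hg : Monotone g) :
    Monotone (G.lazyStep *ᵥ g) := fun X X' hXX' => by
  rw [lazyStep_mulVec_apply, lazyStep_mulVec_apply]
  refine div_le_div_of_nonneg_right (Finset.sum_le_sum fun u _ => Finset.sum_le_sum fun v _ => ?_)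
    G.maxFit_pos.le
  exact mul_le_mul_of_nonneg_left (G.monotone_fit_mul_moranNext hg u v hXX') (G.w_nonneg u v)

end FitnessGraph

/-- Monotonicity of the fixation probability: enlarging the seed set cannot decrease
the fixation probability of the Heterogeneous Moran process. -/
theorem fp_monotone (G : FitnessGraph V) (S S' : Finset V) (hSS' : S ⊆ S') :
    G.fp S ≤ G.fp S' := by
  cases isEmpty_or_nonempty V with
  | inl _ => rw [Subsingleton.elim S S']
  | inr _ =>
    rw [G.fp_eq_absorptionProb, G.fp_eq_absorptionProb, ← G.absorptionProb_lazyStep]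
    exact Matrix.monotone_absorptionProb G.lazyStep_mem_rowStochastic
      (fun _ => G.monotone_lazyStep_mulVec) (fun _ _ => Finset.subset_univ _) hSS'
end

section
/- For every integer n ≥ 2, set x = n^{2n+7} and α = (x/(x+n²))^n. Then 1 − (1 − 1/n²)·α > 0 and ( (α/n²) / (1 − (1 − 1/n²)·α) )^n ≥ 1 − 1/n^{2n}. -/
/-! Bernoulli's inequality `1 - aⁿ ≤ n (1 - a)` is used twice. First, with `a = x / (x + n²)` it
gives `1 - α ≤ n³ / x = n^{-(2n+4)}`, so in particular `α ≥ 1/2`. Second, writing the denominator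
as `(1 - α) + α / n²`, the ratio `R` satisfies `1 - R ≤ n² (1 - α) / α ≤ 2 n^{-(2n+2)}`, hence
`1 - Rⁿ ≤ 2n · n^{-(2n+2)} ≤ n^{-2n}` because `2n ≤ n²`. -/

lemma one_sub_one_sub_inv_mul_eq (a m : ℝ) : 1 - (1 - 1 / m) * a = (1 - a) + a / m := by ring

lemma one_sub_one_sub_inv_mul_pos {a m : ℝ} (ha : 0 < a) (ha1 : a ≤ 1) (hm : 0 < m) :
    0 < 1 - (1 - 1 / m) * a := by
  rw [one_sub_one_sub_inv_mul_eq]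
  exact add_pos_of_nonneg_of_pos (sub_nonneg.2 ha1) (div_pos ha hm)

lemma one_sub_div_le_mul_one_sub_div {a m : ℝ} (ha : 0 < a) (ha1 : a ≤ 1) (hm : 0 < m) :
    1 - a / m / (1 - (1 - 1 / m) * a) ≤ m * (1 - a) / a := by
  have hD := one_sub_one_sub_inv_mul_pos ha ha1 hm
  rw [one_sub_one_sub_inv_mul_eq] at hD ⊢
  calc 1 - a / m / ((1 - a) + a / m) = (1 - a) / ((1 - a) + a / m) := by
        rw [one_sub_div hD.ne', add_sub_cancel_right]
    _ ≤ (1 - a) / (a / m) :=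
        div_le_div_of_nonneg_left (sub_nonneg.2 ha1) (div_pos ha hm) (by linarith)
    _ = m * (1 - a) / a := by field_simp

lemma one_sub_pow_le_of_one_sub_le {a ε : ℝ} (ha : -1 ≤ a) (h : 1 - a ≤ ε) (n : ℕ) :
    1 - a ^ n ≤ n * ε := by
  have := one_add_mul_sub_le_pow ha n
  nlinarith [(Nat.cast_nonneg n : (0:ℝ) ≤ n)]

lemma one_sub_pow_div_add_sq_le {n : ℕ} (hn : 1 ≤ n) :
    1 - ((n : ℝ) ^ (2 * n + 7) / ((n : ℝ) ^ (2 * n + 7) + (n : ℝ) ^ 2)) ^ n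
      ≤ 1 / (n : ℝ) ^ (2 * n + 4) := by
  have hN : (1 : ℝ) ≤ n := by exact_mod_cast hn
  set x : ℝ := (n : ℝ) ^ (2 * n + 7) with hx
  have hx0 : 0 < x := by positivity
  have hbase : -1 ≤ x / (x + (n : ℝ) ^ 2) := by
    have : 0 ≤ x / (x + (n : ℝ) ^ 2) := by positivity
    linarith
  refine (one_sub_pow_le_of_one_sub_le hbase le_rfl n).trans ?_
  calc (n : ℝ) * (1 - x / (x + (n : ℝ) ^ 2)) = n ^ 3 / (x + (n : ℝ) ^ 2) := by field_simp; ring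
    _ ≤ n ^ 3 / x := by gcongr; exact le_add_of_nonneg_right (by positivity)
    _ = 1 / (n : ℝ) ^ (2 * n + 4) := by rw [hx]; field_simp; ring

lemma nat_mul_two_mul_sq_div_pow_le {n : ℕ} (hn : 2 ≤ n) :
    (n : ℝ) * (2 * (n : ℝ) ^ 2 * (1 / (n : ℝ) ^ (2 * n + 4))) ≤ 1 / (n : ℝ) ^ (2 * n) := by
  have hN : (2 : ℝ) ≤ n := by exact_mod_cast hn
  have hpow : (0 : ℝ) < (n : ℝ) ^ (2 * n) := by positivity
  rw [pow_add, mul_one_div, ← mul_div_assoc, div_le_div_iff₀ (by positivity) hpow]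
  have : 2 * (n : ℝ) ≤ n ^ 2 := by nlinarith
  calc (n : ℝ) * (2 * (n : ℝ) ^ 2) * (n : ℝ) ^ (2 * n)
      = (2 * n) * ((n : ℝ) ^ 2 * (n : ℝ) ^ (2 * n)) := by ring
    _ ≤ (n : ℝ) ^ 2 * ((n : ℝ) ^ 2 * (n : ℝ) ^ (2 * n)) := by gcongr
    _ = 1 * ((n : ℝ) ^ (2 * n) * (n : ℝ) ^ 4) := by ring

/-- Quantitative core of the choice of the large mutant fitness `x = n^{2n+7}` in the
mutant-biased inapproximability reduction with `y = 1`. -/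
theorem large_x_bound (n : ℕ) (hn : 2 ≤ n) (x α : ℝ)
    (hx : x = (n : ℝ) ^ (2 * n + 7))
    (hα : α = (x / (x + (n : ℝ) ^ 2)) ^ n) :
    0 < 1 - (1 - 1 / (n : ℝ) ^ 2) * α ∧
      ((α / (n : ℝ) ^ 2) / (1 - (1 - 1 / (n : ℝ) ^ 2) * α)) ^ n ≥ 1 - 1 / (n : ℝ) ^ (2 * n) := by
  subst hx
  have hN : (2 : ℝ) ≤ n := by exact_mod_cast hn
  have hα_pos : 0 < α := by rw [hα]; positivity
  have hα_le : α ≤ 1 := by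
    rw [hα]
    exact pow_le_one₀ (by positivity) (div_le_one_of_le₀ (le_add_of_nonneg_right (by positivity))
      (by positivity))
  have hα_near : 1 - α ≤ 1 / (n : ℝ) ^ (2 * n + 4) := hα ▸ one_sub_pow_div_add_sq_le (by omega)
  have hα_half : 1 / 2 ≤ α := by
    have : 1 / (n : ℝ) ^ (2 * n + 4) ≤ 1 / 2 := by
      gcongr; exact hN.trans (le_self_pow₀ (by linarith) (by omega))
    linarith
  have hsq : (0 : ℝ) < n ^ 2 := by positivity
  have hD := one_sub_one_sub_inv_mul_pos hα_pos hα_le hsq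
  refine ⟨hD, ?_⟩
  have hratio : 1 - α / n ^ 2 / (1 - (1 - 1 / n ^ 2) * α)
      ≤ 2 * (n : ℝ) ^ 2 * (1 / (n : ℝ) ^ (2 * n + 4)) :=
    calc _ ≤ (n : ℝ) ^ 2 * (1 - α) / α := one_sub_div_le_mul_one_sub_div hα_pos hα_le hsq
      _ ≤ (n : ℝ) ^ 2 * (1 / (n : ℝ) ^ (2 * n + 4)) / (1 / 2) := by gcongr
      _ = _ := by ring
  have hR : -1 ≤ α / n ^ 2 / (1 - (1 - 1 / n ^ 2) * α) := by
    have : 0 ≤ α / n ^ 2 / (1 - (1 - 1 / n ^ 2) * α) := by positivity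
    linarith
  have hRn := (one_sub_pow_le_of_one_sub_le hR hratio n).trans (nat_mul_two_mul_sq_div_pow_le hn)
  linarith
end
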